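/- arXiv:2204.11984 — 2 statements merged into one kernel-verified Lean document; each statement's English description precedes it below -/
import Mathlib

section
/- The topological frontier of the Dirichlet domain D equals the set of points of D̄ that admit a nontrivial focal equivalent; that is, ∂D = {H ∈ E : ‖H‖ ≤ ‖H + γ‖ for every γ ∈ Γ, and ‖H‖ = ‖H + γ₀‖ for some nonzero γ₀ ∈ Γ}. -/
/-!
The Dirichlet domain `D` is open: near a point only the finitely many lattice vectors of bounded
length impose a constraint, and each constraint is open. Its closure is `D̄`: for `H ∈ D̄` and
`0 ≤ t < 1`, the identity
`‖tH + γ‖² - ‖tH‖² = t (‖H + γ‖² - ‖H‖²) + (1 - t) ‖γ‖²`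
puts `tH` in `D`, and `tH → H`. Hence `∂D = D̄ \ D`, which is the set of points of `D̄` with a
nontrivial focal equivalent.
-/

open Filter Topology Metric

section NormedAddCommGroup

variable {E : Type*} [NormedAddCommGroup E]

def dirichletDomain (Γ : AddSubgroup E) : Set E :=
  {H | ∀ γ ∈ Γ, γ ≠ 0 → ‖H‖ < ‖H + γ‖}

def closedDirichletDomain (Γ : AddSubgroup E) : Set E :=
  {H | ∀ γ ∈ Γ, ‖H‖ ≤ ‖H + γ‖}

theorem dirichletDomain_subset_closedDirichletDomain (Γ : AddSubgroup E) :
    dirichletDomain Γ ⊆ closedDirichletDomain Γ := by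
  intro H hH γ hγ
  rcases eq_or_ne γ 0 with rfl | hγ0
  · simp
  · exact (hH γ hγ hγ0).le

theorem isClosed_closedDirichletDomain (Γ : AddSubgroup E) :
    IsClosed (closedDirichletDomain Γ) := by
  simp only [closedDirichletDomain, Set.ofPred_forall]
  exact isClosed_biInter fun γ _ =>
    isClosed_le continuous_norm (continuous_id.add continuous_const).norm

theorem closedDirichletDomain_diff_dirichletDomain (Γ : AddSubgroup E) :
    closedDirichletDomain Γ \ dirichletDomain Γ =
      {H | H ∈ closedDirichletDomain Γ ∧ ∃ γ₀ ∈ Γ, γ₀ ≠ 0 ∧ ‖H‖ = ‖H + γ₀‖} := by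
  ext H
  simp only [dirichletDomain, Set.mem_sdiff, Set.mem_ofPred_eq, not_forall, not_lt]
  refine and_congr_right fun hH => ?_
  constructor
  · rintro ⟨γ₀, hγ₀, hne, hle⟩
    exact ⟨γ₀, hγ₀, hne, le_antisymm (hH γ₀ hγ₀) hle⟩
  · rintro ⟨γ₀, hγ₀, hne, heq⟩
    exact ⟨γ₀, hγ₀, hne, heq.ge⟩

theorem AddSubgroup.finite_inter_closedBall [ProperSpace E] (Γ : AddSubgroup E)
    [DiscreteTopology Γ] (R : ℝ) : ((Γ : Set E) ∩ closedBall 0 R).Finite :=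
  ((isCompact_closedBall 0 R).inter_left AddSubgroup.isClosed_of_discrete).finite <|
    (isDiscrete_iff_discreteTopology.2 ‹_›).mono Set.inter_subset_left

theorem isOpen_dirichletDomain [ProperSpace E] (Γ : AddSubgroup E) [DiscreteTopology Γ] :
    IsOpen (dirichletDomain Γ) := by
  refine isOpen_iff_eventually.2 fun H hH => ?_
  set R := 2 * ‖H‖ + 2
  have hnear : ∀ᶠ H' in 𝓝 H, ‖H'‖ < ‖H‖ + 1 :=
    continuous_norm.continuousAt.eventually_lt continuousAt_const (lt_add_one _)
  have hshort : ∀ᶠ H' in 𝓝 H, ∀ γ ∈ (Γ : Set E) ∩ closedBall 0 R, γ ≠ 0 → ‖H'‖ < ‖H' + γ‖ :=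
    (Γ.finite_inter_closedBall R).eventually_all.2 fun γ hγ =>
      eventually_imp_distrib_left.2 fun hγ0 =>
        continuous_norm.continuousAt.eventually_lt
          (continuous_id.add continuous_const).norm.continuousAt (hH γ hγ.1 hγ0)
  filter_upwards [hnear, hshort] with H' hH'near hH'short γ hγ hγ0
  rcases le_or_gt ‖γ‖ R with hle | hlong
  · exact hH'short γ ⟨hγ, mem_closedBall_zero_iff.2 hle⟩ hγ0
  · -- a long `γ` moves `H'` far away: `‖H' + γ‖ ≥ ‖γ‖ - ‖H'‖ > ‖H‖ + 1 > ‖H'‖`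
    have := norm_sub_norm_le γ (-H')
    rw [sub_neg_eq_add, norm_neg, add_comm] at this
    linarith [norm_nonneg H]

end NormedAddCommGroup

section InnerProductSpace

variable {E : Type*} [NormedAddCommGroup E] [InnerProductSpace ℝ E]

theorem norm_smul_add_sq_sub_norm_smul_sq (t : ℝ) (H γ : E) :
    ‖t • H + γ‖ ^ 2 - ‖t • H‖ ^ 2 = t * (‖H + γ‖ ^ 2 - ‖H‖ ^ 2) + (1 - t) * ‖γ‖ ^ 2 := by
  rw [norm_add_sq_real, norm_add_sq_real, real_inner_smul_left, norm_smul, Real.norm_eq_abs,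
    mul_pow, sq_abs]
  ring

theorem norm_smul_lt_norm_smul_add {t : ℝ} (ht₀ : 0 ≤ t) (ht₁ : t < 1) {H γ : E}
    (hH : ‖H‖ ≤ ‖H + γ‖) (hγ : γ ≠ 0) : ‖t • H‖ < ‖t • H + γ‖ := by
  refine lt_of_pow_lt_pow_left₀ 2 (norm_nonneg _) (sub_pos.1 ?_)
  rw [norm_smul_add_sq_sub_norm_smul_sq]
  have hH2 : 0 ≤ ‖H + γ‖ ^ 2 - ‖H‖ ^ 2 := sub_nonneg.2 (pow_le_pow_left₀ (norm_nonneg _) hH 2)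
  have hγ2 : 0 < ‖γ‖ ^ 2 := by positivity
  exact add_pos_of_nonneg_of_pos (mul_nonneg ht₀ hH2) (mul_pos (sub_pos.2 ht₁) hγ2)

theorem smul_mem_dirichletDomain {Γ : AddSubgroup E} {H : E} (hH : H ∈ closedDirichletDomain Γ)
    {t : ℝ} (ht₀ : 0 ≤ t) (ht₁ : t < 1) : t • H ∈ dirichletDomain Γ :=
  fun γ hγ hγ0 => norm_smul_lt_norm_smul_add ht₀ ht₁ (hH γ hγ) hγ0

theorem closedDirichletDomain_subset_closure (Γ : AddSubgroup E) :
    closedDirichletDomain Γ ⊆ closure (dirichletDomain Γ) := by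
  intro H hH
  have htend : Tendsto (fun t : ℝ => t • H) (𝓝[<] 1) (𝓝 H) := by
    simpa using ((tendsto_id (x := 𝓝 (1 : ℝ))).smul_const H).mono_left nhdsWithin_le_nhds
  have hIco : Set.Ico (0 : ℝ) 1 ∈ 𝓝[<] (1 : ℝ) := Ico_mem_nhdsLT_of_mem ⟨zero_lt_one, le_rfl⟩
  exact mem_closure_of_tendsto htend
    (mem_of_superset hIco fun t ht => smul_mem_dirichletDomain hH ht.1 ht.2)

theorem closure_dirichletDomain (Γ : AddSubgroup E) :
    closure (dirichletDomain Γ) = closedDirichletDomain Γ :=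
  (closure_minimal (dirichletDomain_subset_closedDirichletDomain Γ)
    (isClosed_closedDirichletDomain Γ)).antisymm (closedDirichletDomain_subset_closure Γ)

end InnerProductSpace

theorem frontier_dirichlet_eq_focal_general {E : Type*}
    [NormedAddCommGroup E] [InnerProductSpace ℝ E] [FiniteDimensional ℝ E]
    (Γ : AddSubgroup E) [DiscreteTopology Γ] :
    frontier {H : E | ∀ γ ∈ Γ, γ ≠ 0 → ‖H‖ < ‖H + γ‖} =
      {H : E | (∀ γ ∈ Γ, ‖H‖ ≤ ‖H + γ‖) ∧ ∃ γ₀ ∈ Γ, γ₀ ≠ 0 ∧ ‖H‖ = ‖H + γ₀‖} := by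
  change frontier (dirichletDomain Γ) = _
  rw [(isOpen_dirichletDomain Γ).frontier_eq, closure_dirichletDomain,
    closedDirichletDomain_diff_dirichletDomain]
  rfl

/-- Proposition 4.3(iv) of [SS18]: the frontier of the Dirichlet domain `D` of a
full-rank lattice `Γ` is the set of points of `D̄` admitting a nontrivial focal
equivalent, i.e. those `H ∈ D̄` with `‖H‖ = ‖H + γ₀‖` for some nonzero `γ₀ ∈ Γ`. -/
theorem frontier_dirichlet_eq_focal {E : Type*}
    [NormedAddCommGroup E] [InnerProductSpace ℝ E] [FiniteDimensional ℝ E]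
    (Γ : AddSubgroup E) [DiscreteTopology Γ]
    (hspan : Submodule.span ℝ (Γ : Set E) = ⊤) :
    frontier {H : E | ∀ γ ∈ Γ, γ ≠ 0 → ‖H‖ < ‖H + γ‖} =
      {H : E | (∀ γ ∈ Γ, ‖H‖ ≤ ‖H + γ‖) ∧ ∃ γ₀ ∈ Γ, γ₀ ≠ 0 ∧ ‖H‖ = ‖H + γ₀‖} :=
  frontier_dirichlet_eq_focal_general Γ
end

section
/- Let H ∈ E satisfy ⟨α, H⟩ ≤ π for every α ∈ Φ. Then the set of focal equivalents of H with respect to Γ₀, namely {Y ∈ E : Y − H ∈ Γ₀ and ‖Y‖ = ‖H‖}, equals the orbit of H under the subgroup W₀(H), i.e. {w H : w ∈ W₀(H)}. -/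
/-!
Write `Y = H + δ` with `δ ∈ Γ₀`. Every nonzero `δ ∈ Γ₀` pairs to at least `2π` with some root `α`:
in a shortest expression of `δ` as a sum of generators `π β^∨` no two summands have negative
inner product, since two such summands add up to `0` or to a single generator. For that `α`,
`‖H + δ‖² = ‖H + δ - πα^∨‖² + (4π / ‖α‖²) (⟪α, H⟫ + ⟪α, δ⟫ - π)`, and the last factor is
nonnegative because `⟪-α, H⟫ ≤ π`. Replacing `δ` by `δ - πα^∨` lowers `‖δ‖²` by a uniform amount,
so by descent `‖H‖ ≤ ‖H + δ‖` on all of `H + Γ₀`. In the equality case `⟪α, H⟫ = -π` and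
`⟪α, δ⟫ = 2π`, so `H + δ = r_α (H + δ - πα^∨)` with `r_α ∈ W₀(H)`. Conversely, `W₀(H)` preserves
the norm and the coset `H + Γ₀`, on which every root takes values in `πℤ`.
-/

open scoped RealInnerProductSpace

open Real Submodule

@[elab_as_elim]
theorem induction_of_forall_le_sub {ι : Type*} (f : ι → ℝ) (hf : ∀ i, 0 ≤ f i) {ε : ℝ}
    (hε : 0 < ε) {P : ι → Prop} (step : ∀ i, (∀ j, f j ≤ f i - ε → P j) → P i) (i : ι) :
    P i := by
  suffices h : ∀ n : ℕ, ∀ i, f i ≤ n * ε → P i by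
    obtain ⟨n, hn⟩ := exists_nat_ge (f i / ε)
    exact h n i ((div_le_iff₀ hε).1 hn)
  intro n
  induction n with
  | zero => exact fun i hi => step i fun j hj => absurd (hf j) (by simp at hi; linarith)
  | succ n ih => exact fun i hi => step i fun j hj => ih j (by push_cast at hi; linarith)

section

variable {E : Type*} [NormedAddCommGroup E] [InnerProductSpace ℝ E]

theorem reflection_orthogonal_singleton_apply (α x : E) :
    reflection (ℝ ∙ α)ᗮ x = x - (2 * ⟪x, α⟫ / ⟪α, α⟫) • α := by
  rw [reflection_orthogonal_apply, reflection_singleton_apply, real_inner_comm,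
    RCLike.ofReal_real_eq_id, id, ← real_inner_self_eq_norm_sq, two_smul]
  module

/-- The vector `π α^∨`. -/
noncomputable def piCoroot (α : E) : E := (2 * π / ⟪α, α⟫) • α

theorem inner_piCoroot_right (x α : E) : ⟪x, piCoroot α⟫ = 2 * π / ⟪α, α⟫ * ⟪x, α⟫ :=
  real_inner_smul_right _ _ _

theorem inner_self_piCoroot {α : E} (hα : α ≠ 0) : ⟪α, piCoroot α⟫ = 2 * π := by
  rw [inner_piCoroot_right, div_mul_cancel₀ _ (inner_self_ne_zero.2 hα)]

theorem piCoroot_neg (α : E) : piCoroot (-α) = -piCoroot α := by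
  simp [piCoroot]

theorem LinearIsometryEquiv.map_piCoroot (f : E ≃ₗᵢ[ℝ] E) (α : E) :
    f (piCoroot α) = piCoroot (f α) := by
  rw [piCoroot, piCoroot, map_smul, real_inner_self_eq_norm_sq, real_inner_self_eq_norm_sq,
    f.norm_map]

theorem reflection_orthogonal_singleton_eq_sub_piCoroot (α x : E) :
    reflection (ℝ ∙ α)ᗮ x = x - (⟪x, α⟫ / π) • piCoroot α := by
  rw [reflection_orthogonal_singleton_apply, piCoroot, smul_smul]
  congr 2
  field_simp

theorem reflection_orthogonal_singleton_of_inner_eq_neg_pi {α x : E} (h : ⟪x, α⟫ = -π) :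
    reflection (ℝ ∙ α)ᗮ x = x + piCoroot α := by
  rw [reflection_orthogonal_singleton_eq_sub_piCoroot, h, neg_div, div_self pi_ne_zero,
    neg_one_smul, sub_neg_eq_add]

theorem norm_add_sq_eq_norm_add_sub_piCoroot_sq {α : E} (hα : α ≠ 0) (H δ : E) :
    ‖H + δ‖ ^ 2 =
      ‖H + (δ - piCoroot α)‖ ^ 2 + 2 * (2 * π / ⟪α, α⟫) * (⟪α, H⟫ + ⟪α, δ⟫ - π) := by
  have hp : ⟪piCoroot α, piCoroot α⟫ = 2 * π / ⟪α, α⟫ * (2 * π) := by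
    rw [inner_piCoroot_right, piCoroot, real_inner_smul_left,
      div_mul_cancel₀ _ (inner_self_ne_zero.2 hα)]
  rw [← add_sub_assoc, ← real_inner_self_eq_norm_sq, ← real_inner_self_eq_norm_sq,
    inner_sub_sub_self, hp, real_inner_comm _ (piCoroot α), inner_piCoroot_right,
    inner_add_left H δ α, real_inner_comm H, real_inner_comm δ]
  ring

theorem reflection_orthogonal_singleton_add_sub_piCoroot {α H δ : E} (hα : α ≠ 0)
    (hαH : ⟪α, H⟫ = -π) (hαδ : ⟪α, δ⟫ = 2 * π) :
    reflection (ℝ ∙ α)ᗮ (H + (δ - piCoroot α)) = H + δ := by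
  have hinner : ⟪H + (δ - piCoroot α), α⟫ = -π := by
    rw [real_inner_comm, inner_add_right, inner_sub_right, inner_self_piCoroot hα, hαH, hαδ]
    ring
  rw [reflection_orthogonal_singleton_of_inner_eq_neg_pi hinner]
  abel

variable (Φ : Finset E) (H : E)

structure IsCrystallographic : Prop where
  ne_zero : ∀ α ∈ Φ, α ≠ 0
  reflection_mem : ∀ α ∈ Φ, ∀ β ∈ Φ, reflection (ℝ ∙ α)ᗮ β ∈ Φ
  cartan_int : ∀ α ∈ Φ, ∀ β ∈ Φ, ∃ n : ℤ, 2 * ⟪β, α⟫ / ⟪α, α⟫ = n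

def fundamentalLattice : AddSubgroup E := AddSubgroup.closure (piCoroot '' Φ)

def focalEquivalents : Set E := {Y | Y - H ∈ fundamentalLattice Φ ∧ ‖Y‖ = ‖H‖}

/-- The group `W₀(H)`. -/
noncomputable def weylGroupAt : Subgroup (E ≃ₗ[ℝ] E) :=
  Subgroup.closure ((fun α => (reflection (ℝ ∙ α)ᗮ).toLinearEquiv) ''
    {α | α ∈ Φ ∧ ∃ n : ℤ, ⟪α, H⟫ = n * π})

variable {Φ H}

theorem mem_focalEquivalents {Y : E} :
    Y ∈ focalEquivalents Φ H ↔ Y - H ∈ fundamentalLattice Φ ∧ ‖Y‖ = ‖H‖ :=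
  Iff.rfl

theorem reflection_mem_weylGroupAt {α : E} (hα : α ∈ Φ) (hαH : ∃ n : ℤ, ⟪α, H⟫ = n * π) :
    (reflection (ℝ ∙ α)ᗮ).toLinearEquiv ∈ weylGroupAt Φ H :=
  Subgroup.subset_closure ⟨α, ⟨hα, hαH⟩, rfl⟩

theorem closure_eq_weylGroupAt :
    Subgroup.closure {w : E ≃ₗ[ℝ] E | ∃ α ∈ Φ, (∃ n : ℤ, ⟪α, H⟫ = n * π) ∧
      ∀ x, w x = x - (2 * ⟪x, α⟫ / ⟪α, α⟫) • α} = weylGroupAt Φ H := by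
  congr 1
  ext w
  simp only [Set.mem_ofPred_eq, Set.mem_image, and_assoc, LinearEquiv.ext_iff, eq_comm (a := w _),
    LinearIsometryEquiv.coe_toLinearEquiv, reflection_orthogonal_singleton_apply]

namespace IsCrystallographic

theorem neg_mem (hΦ : IsCrystallographic Φ) {α : E} (hα : α ∈ Φ) :
    -α ∈ Φ := by
  simpa [reflection_orthogonalComplement_singleton_eq_neg] using hΦ.reflection_mem α hα α hα

theorem two_pi_div_inner_self_pos (hΦ : IsCrystallographic Φ) {α : E} (hα : α ∈ Φ) :
    0 < 2 * π / ⟪α, α⟫ :=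
  div_pos two_pi_pos (real_inner_self_pos.2 (hΦ.ne_zero α hα))

theorem inner_eq_int_mul_pi (hΦ : IsCrystallographic Φ) {α δ : E}
    (hα : α ∈ Φ) (hδ : δ ∈ fundamentalLattice Φ) : ∃ n : ℤ, ⟪α, δ⟫ = n * π := by
  have hle : fundamentalLattice Φ ≤
      (AddSubgroup.zmultiples π).comap (innerₛₗ ℝ α).toAddMonoidHom := by
    refine AddSubgroup.closure_le _ |>.2 ?_
    rintro _ ⟨β, hβ, rfl⟩
    obtain ⟨n, hn⟩ := hΦ.cartan_int β hβ α hα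
    refine ⟨n, ?_⟩
    show n • π = ⟪α, piCoroot β⟫
    rw [inner_piCoroot_right, zsmul_eq_mul, ← hn]
    ring
  obtain ⟨n, hn⟩ := hle hδ
  exact ⟨n, by simpa [zsmul_eq_mul] using hn.symm⟩

theorem reflection_mem_focalEquivalents (hΦ : IsCrystallographic Φ) {α : E}
    (hα : α ∈ Φ) (hαH : ∃ n : ℤ, ⟪α, H⟫ = n * π) {Y : E} (hY : Y ∈ focalEquivalents Φ H) :
    reflection (ℝ ∙ α)ᗮ Y ∈ focalEquivalents Φ H := by
  obtain ⟨m, hm⟩ := hαH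
  obtain ⟨k, hk⟩ := hΦ.inner_eq_int_mul_pi hα hY.1
  have hYα : ⟪Y, α⟫ = ((m + k : ℤ) : ℝ) * π := by
    rw [real_inner_comm, ← add_sub_cancel H Y, inner_add_right, hm, hk]
    push_cast
    ring
  refine mem_focalEquivalents.2 ⟨?_, by rw [LinearIsometryEquiv.norm_map]; exact hY.2⟩
  rw [reflection_orthogonal_singleton_eq_sub_piCoroot, hYα, mul_div_cancel_right₀ _ pi_ne_zero,
    sub_right_comm, Int.cast_smul_eq_zsmul]
  exact sub_mem hY.1 (zsmul_mem (AddSubgroup.subset_closure (Set.mem_image_of_mem piCoroot hα)) _)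

theorem mapsTo_focalEquivalents (hΦ : IsCrystallographic Φ) {w : E ≃ₗ[ℝ] E}
    (hw : w ∈ weylGroupAt Φ H) : Set.MapsTo w (focalEquivalents Φ H) (focalEquivalents Φ H) := by
  induction hw using Subgroup.closure_induction'' with
  | mem w hw =>
    obtain ⟨α, ⟨hα, hαH⟩, rfl⟩ := hw
    exact fun Y => hΦ.reflection_mem_focalEquivalents hα hαH
  | inv_mem w hw =>
    obtain ⟨α, ⟨hα, hαH⟩, rfl⟩ := hw
    intro Y hY
    show (reflection _).toLinearEquiv.symm Y ∈ _
    simp only [← LinearIsometryEquiv.toLinearEquiv_symm, reflection_symm]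
    exact hΦ.reflection_mem_focalEquivalents hα hαH hY
  | one => exact Set.mapsTo_id _
  | mul w₁ w₂ _ _ h₁ h₂ => exact h₁.comp h₂

theorem two_inner_eq_neg_or_le (hΦ : IsCrystallographic Φ) {α β : E}
    (hα : α ∈ Φ) (hβ : β ∈ Φ) (h : ⟪α, β⟫ < 0) :
    2 * ⟪α, β⟫ = -⟪α, α⟫ ∨ 2 * ⟪α, β⟫ ≤ -2 * ⟪α, α⟫ := by
  obtain ⟨n, hn⟩ := hΦ.cartan_int α hα β hβ
  have hαα : 0 < ⟪α, α⟫ := real_inner_self_pos.2 (hΦ.ne_zero α hα)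
  have hn' : 2 * ⟪α, β⟫ = n * ⟪α, α⟫ := by
    rw [← hn, real_inner_comm, div_mul_cancel₀ _ hαα.ne']
  have hneg : n < 0 := by
    have : (n : ℝ) * ⟪α, α⟫ < 0 := by linarith
    exact_mod_cast neg_of_mul_neg_left this hαα.le
  rw [hn']
  rcases (by omega : n = -1 ∨ n ≤ -2) with rfl | hle
  · left; push_cast; ring
  · right
    have := mul_le_mul_of_nonneg_right (by exact_mod_cast hle : (n : ℝ) ≤ -2) hαα.le
    linarith

theorem piCoroot_add_piCoroot (hΦ : IsCrystallographic Φ) {α β : E}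
    (hα : α ∈ Φ) (hβ : β ∈ Φ) (h : ⟪α, β⟫ < 0) :
    piCoroot α + piCoroot β = 0 ∨ ∃ γ ∈ Φ, piCoroot α + piCoroot β = piCoroot γ := by
  have hreflect : ∀ {α β : E}, α ∈ Φ → β ∈ Φ → 2 * ⟪β, α⟫ = -⟪β, β⟫ →
      piCoroot α + piCoroot β = piCoroot (reflection (ℝ ∙ α)ᗮ β) := by
    intro α β hα hβ h
    have hββ : ⟪β, β⟫ ≠ 0 := inner_self_ne_zero.2 (hΦ.ne_zero β hβ)
    rw [← LinearIsometryEquiv.map_piCoroot, reflection_orthogonal_singleton_of_inner_eq_neg_pi,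
      add_comm]
    rw [real_inner_comm, inner_piCoroot_right]
    field_simp
    linarith [real_inner_comm α β]
  -- A Cartan integer `-1` makes the sum the coroot of a reflected root; if both are `≤ -2`,
  -- then `‖α + β‖² ≤ 0`.
  rcases hΦ.two_inner_eq_neg_or_le hβ hα (by rwa [real_inner_comm]) with hb | hb
  · exact .inr ⟨_, hΦ.reflection_mem α hα β hβ, hreflect hα hβ hb⟩
  rcases hΦ.two_inner_eq_neg_or_le hα hβ h with ha | ha
  · exact .inr ⟨_, hΦ.reflection_mem β hβ α hα, by rw [add_comm, hreflect hβ hα ha]⟩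
  have hsum : α + β = 0 := by
    rw [← inner_self_eq_zero (𝕜 := ℝ)]
    refine le_antisymm ?_ real_inner_self_nonneg
    rw [inner_add_add_self]
    linarith [real_inner_comm α β]
  rw [eq_neg_of_add_eq_zero_right hsum, piCoroot_neg, add_neg_cancel]
  exact .inl rfl

theorem exists_multiset_sum_eq (hΦ : IsCrystallographic Φ) {δ : E}
    (hδ : δ ∈ fundamentalLattice Φ) :
    ∃ s : Multiset E, (∀ ψ ∈ s, ψ ∈ piCoroot '' Φ) ∧ s.sum = δ := by
  have hneg : -(piCoroot '' (Φ : Set E)) ⊆ piCoroot '' Φ := by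
    rintro _ ⟨α, hα, hαψ⟩
    exact ⟨-α, hΦ.neg_mem hα, by rw [piCoroot_neg, hαψ, neg_neg]⟩
  have hδ' : δ ∈ AddSubmonoid.closure (piCoroot '' (Φ : Set E) ∪ -(piCoroot '' Φ)) := by
    rw [← AddSubgroup.closure_toAddSubmonoid]
    exact hδ
  rw [Set.union_eq_left.2 hneg] at hδ'
  exact AddSubmonoid.exists_multiset_of_mem_closure hδ'

theorem exists_two_pi_le_inner_sum (hΦ : IsCrystallographic Φ)
    {s : Multiset E} (hs : ∀ ψ ∈ s, ψ ∈ piCoroot '' Φ)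
    (hpair : ∀ ψ χ r, ψ ::ₘ χ ::ₘ r = s → 0 ≤ ⟪ψ, χ⟫) (hs0 : s ≠ 0) :
    ∃ α ∈ Φ, 2 * π ≤ ⟪α, s.sum⟫ := by
  obtain ⟨ψ, hψ⟩ := Multiset.exists_mem_of_ne_zero hs0
  obtain ⟨s', rfl⟩ := Multiset.exists_cons_of_mem hψ
  obtain ⟨α, hα, rfl⟩ := hs _ hψ
  have hrest : 0 ≤ ⟪α, s'.sum⟫ := by
    rw [← innerₛₗ_apply_apply, map_multiset_sum]
    refine Multiset.sum_nonneg fun x hx => ?_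
    obtain ⟨χ, hχ, rfl⟩ := Multiset.mem_map.1 hx
    obtain ⟨r, rfl⟩ := Multiset.exists_cons_of_mem hχ
    have := hpair _ χ r rfl
    rw [piCoroot, real_inner_smul_left] at this
    exact nonneg_of_mul_nonneg_right this (hΦ.two_pi_div_inner_self_pos hα)
  refine ⟨α, hα, ?_⟩
  rw [Multiset.sum_cons, inner_add_right, inner_self_piCoroot (hΦ.ne_zero α hα)]
  linarith

theorem exists_shorter_sum (hΦ : IsCrystallographic Φ) {ψ χ : E}
    {r : Multiset E} (hs : ∀ x ∈ ψ ::ₘ χ ::ₘ r, x ∈ piCoroot '' Φ) (h : ⟪ψ, χ⟫ < 0) :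
    ∃ t : Multiset E, (∀ x ∈ t, x ∈ piCoroot '' Φ) ∧ t.sum = (ψ ::ₘ χ ::ₘ r).sum ∧
      t.card < (ψ ::ₘ χ ::ₘ r).card := by
  obtain ⟨α, hα, rfl⟩ := hs ψ (by simp)
  obtain ⟨β, hβ, rfl⟩ := hs χ (by simp)
  have hr : ∀ x ∈ r, x ∈ piCoroot '' Φ := fun x hx => hs x (by simp [hx])
  have hαβ : ⟪α, β⟫ < 0 := by
    rw [piCoroot, real_inner_smul_left, inner_piCoroot_right] at h
    exact neg_of_mul_neg_right (neg_of_mul_neg_right h (hΦ.two_pi_div_inner_self_pos hα).le)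
      (hΦ.two_pi_div_inner_self_pos hβ).le
  simp only [Multiset.sum_cons, Multiset.card_cons, ← add_assoc]
  rcases hΦ.piCoroot_add_piCoroot hα hβ hαβ with h0 | ⟨γ, hγ, hγαβ⟩
  · exact ⟨r, hr, by rw [h0, zero_add], by omega⟩
  · exact ⟨piCoroot γ ::ₘ r, Multiset.forall_mem_cons.2 ⟨⟨γ, hγ, rfl⟩, hr⟩,
      by rw [Multiset.sum_cons, hγαβ], by simp⟩

theorem exists_two_pi_le_inner (hΦ : IsCrystallographic Φ) {δ : E}
    (hδ : δ ∈ fundamentalLattice Φ) (hδ0 : δ ≠ 0) : ∃ α ∈ Φ, 2 * π ≤ ⟪α, δ⟫ := by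
  obtain ⟨s, hs, rfl⟩ := hΦ.exists_multiset_sum_eq hδ
  clear hδ
  induction hn : s.card using Nat.strong_induction_on generalizing s with
  | _ n ih =>
    by_cases hpair : ∃ ψ χ r, ψ ::ₘ χ ::ₘ r = s ∧ ⟪ψ, χ⟫ < 0
    · obtain ⟨ψ, χ, r, rfl, h⟩ := hpair
      obtain ⟨t, ht, hts, htcard⟩ := hΦ.exists_shorter_sum hs h
      rw [← hts] at hδ0 ⊢
      exact ih _ (hn ▸ htcard) t ht hδ0 rfl
    · push Not at hpair
      exact hΦ.exists_two_pi_le_inner_sum hs hpair (by rintro rfl; exact hδ0 Multiset.sum_zero)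

theorem exists_pos_le_two_pi_div (hΦ : IsCrystallographic Φ) :
    ∃ c > 0, ∀ α ∈ Φ, c ≤ 2 * π / ⟪α, α⟫ := by
  have hsum : 0 ≤ ∑ α ∈ Φ, ⟪α, α⟫ := Finset.sum_nonneg fun α _ => real_inner_self_nonneg
  refine ⟨2 * π / (1 + ∑ α ∈ Φ, ⟪α, α⟫), by positivity, fun α hα => ?_⟩
  refine div_le_div_of_nonneg_left two_pi_pos.le (real_inner_self_pos.2 (hΦ.ne_zero α hα)) ?_
  linarith [Finset.single_le_sum (fun β _ => real_inner_self_nonneg (x := β)) hα]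

theorem norm_le_norm_add_and_exists_of_norm_eq (hΦ : IsCrystallographic Φ)
    (hH : ∀ α ∈ Φ, ⟪α, H⟫ ≤ π) {δ : E} (hδ : δ ∈ fundamentalLattice Φ) :
    ‖H‖ ≤ ‖H + δ‖ ∧ (‖H + δ‖ = ‖H‖ → ∃ w ∈ weylGroupAt Φ H, w H = H + δ) := by
  obtain ⟨c, hc, hcα⟩ := hΦ.exists_pos_le_two_pi_div
  revert hδ
  refine induction_of_forall_le_sub (fun δ => ‖δ‖ ^ 2) (fun _ => sq_nonneg _)
    (mul_pos hc pi_pos) ?_ δ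
  intro δ ih hδ
  rcases eq_or_ne δ 0 with rfl | hδ0
  · simpa using ⟨1, one_mem _, rfl⟩
  obtain ⟨α, hα, hαδ⟩ := hΦ.exists_two_pi_le_inner hδ hδ0
  have hα0 := hΦ.ne_zero α hα
  have hαH : -π ≤ ⟪α, H⟫ := by
    linarith [inner_neg_left (𝕜 := ℝ) α H, hH (-α) (hΦ.neg_mem hα)]
  have hδ' : δ - piCoroot α ∈ fundamentalLattice Φ :=
    sub_mem hδ (AddSubgroup.subset_closure (Set.mem_image_of_mem piCoroot hα))
  have hdesc := norm_add_sq_eq_norm_add_sub_piCoroot_sq hα0 0 δ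
  have hsplit := norm_add_sq_eq_norm_add_sub_piCoroot_sq hα0 H δ
  simp only [zero_add, inner_zero_right] at hdesc
  set cα := 2 * π / ⟪α, α⟫
  have hccα : c * π ≤ cα * π := mul_le_mul_of_nonneg_right (hcα α hα) pi_pos.le
  have hcαπ : cα * π ≤ cα * (⟪α, δ⟫ - π) :=
    mul_le_mul_of_nonneg_left (by linarith) (hΦ.two_pi_div_inner_self_pos hα).le
  have hgap : 0 ≤ cα * (⟪α, H⟫ + ⟪α, δ⟫ - π) :=
    mul_nonneg (hΦ.two_pi_div_inner_self_pos hα).le (by linarith)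
  obtain ⟨hle, horbit⟩ := ih (δ - piCoroot α) (by linarith [mul_pos hc pi_pos]) hδ'
  have hle' := pow_le_pow_left₀ (norm_nonneg H) hle 2
  refine ⟨le_of_sq_le_sq (by linarith) (norm_nonneg _), fun heq => ?_⟩
  rw [heq] at hsplit
  have hwall : ⟪α, H⟫ + ⟪α, δ⟫ - π = 0 :=
    (mul_eq_zero.1 (by linarith : cα * (⟪α, H⟫ + ⟪α, δ⟫ - π) = 0)).resolve_left
      (hΦ.two_pi_div_inner_self_pos hα).ne'
  have hαH' : ⟪α, H⟫ = -π := by linarith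
  obtain ⟨w, hw, hwH⟩ := horbit <|
    (pow_left_inj₀ (norm_nonneg _) (norm_nonneg _) two_ne_zero).1 (by linarith)
  refine ⟨_, mul_mem (reflection_mem_weylGroupAt hα ⟨-1, by simp [hαH']⟩) hw, ?_⟩
  rw [LinearEquiv.mul_apply, hwH, LinearIsometryEquiv.coe_toLinearEquiv,
    reflection_orthogonal_singleton_add_sub_piCoroot hα0 hαH' (by linarith)]

theorem exists_apply_eq_of_mem_focalEquivalents (hΦ : IsCrystallographic Φ)
    (hH : ∀ α ∈ Φ, ⟪α, H⟫ ≤ π) {Y : E} (hY : Y ∈ focalEquivalents Φ H) :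
    ∃ w ∈ weylGroupAt Φ H, w H = Y := by
  simpa using (hΦ.norm_le_norm_add_and_exists_of_norm_eq hH hY.1).2 (by simpa using hY.2)

end IsCrystallographic

end

theorem focal_equivalents_eq_orbit_general {E : Type*}
    [NormedAddCommGroup E] [InnerProductSpace ℝ E]
    (Φ : Finset E)
    (hne : ∀ α ∈ Φ, α ≠ 0)
    (hrefl : ∀ α ∈ Φ, ∀ β ∈ Φ, β - (2 * ⟪β, α⟫ / ⟪α, α⟫) • α ∈ Φ)
    (hint : ∀ α ∈ Φ, ∀ β ∈ Φ, ∃ n : ℤ, 2 * ⟪β, α⟫ / ⟪α, α⟫ = (n : ℝ))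
    (Γ₀ : AddSubgroup E)
    (hΓ₀ : Γ₀ = AddSubgroup.closure ((fun α : E => (2 * Real.pi / ⟪α, α⟫) • α) '' Φ))
    (H : E) (hH : ∀ α ∈ Φ, ⟪α, H⟫ ≤ Real.pi)
    (W₀H : Subgroup (E ≃ₗ[ℝ] E))
    (hW₀H : W₀H = Subgroup.closure {w : E ≃ₗ[ℝ] E | ∃ α ∈ Φ,
        (∃ n : ℤ, ⟪α, H⟫ = (n : ℝ) * Real.pi) ∧
        ∀ x : E, w x = x - (2 * ⟪x, α⟫ / ⟪α, α⟫) • α}) :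
    {Y : E | Y - H ∈ Γ₀ ∧ ‖Y‖ = ‖H‖} = {Y : E | ∃ w ∈ W₀H, w H = Y} := by
  have hΦ : IsCrystallographic Φ :=
    ⟨hne, fun α hα β hβ => by simpa [reflection_orthogonal_singleton_apply] using hrefl α hα β hβ,
      hint⟩
  subst hΓ₀ hW₀H
  rw [closure_eq_weylGroupAt]
  ext Y
  refine ⟨hΦ.exists_apply_eq_of_mem_focalEquivalents hH, ?_⟩
  rintro ⟨w, hw, rfl⟩
  exact hΦ.mapsTo_focalEquivalents hw ⟨by simp [zero_mem], rfl⟩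

/-- Theorem 4.5(ii) of [SS18] / Theorem `thm-steinberg`(ii): if `H` lies in the
closed alcove `{H : ⟨α, H⟩ ≤ π for all α ∈ Φ}` of a crystallographic root system
`Φ`, then the focal equivalents of `H` with respect to the fundamental lattice
`Γ₀` are exactly the orbit of `H` under the subgroup `W₀(H)` of the Weyl group
generated by the reflections `r_α` with `⟨α, H⟩ ∈ πℤ`. -/
theorem focal_equivalents_eq_orbit {E : Type*}
    [NormedAddCommGroup E] [InnerProductSpace ℝ E] [FiniteDimensional ℝ E]
    (Φ : Finset E)
    (hne : ∀ α ∈ Φ, α ≠ 0)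
    (hspan : Submodule.span ℝ (Φ : Set E) = ⊤)
    (hrefl : ∀ α ∈ Φ, ∀ β ∈ Φ, β - (2 * ⟪β, α⟫ / ⟪α, α⟫) • α ∈ Φ)
    (hint : ∀ α ∈ Φ, ∀ β ∈ Φ, ∃ n : ℤ, 2 * ⟪β, α⟫ / ⟪α, α⟫ = (n : ℝ))
    (Γ₀ : AddSubgroup E)
    (hΓ₀ : Γ₀ = AddSubgroup.closure ((fun α : E => (2 * Real.pi / ⟪α, α⟫) • α) '' Φ))
    (H : E) (hH : ∀ α ∈ Φ, ⟪α, H⟫ ≤ Real.pi)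
    (W₀H : Subgroup (E ≃ₗ[ℝ] E))
    (hW₀H : W₀H = Subgroup.closure {w : E ≃ₗ[ℝ] E | ∃ α ∈ Φ,
        (∃ n : ℤ, ⟪α, H⟫ = (n : ℝ) * Real.pi) ∧
        ∀ x : E, w x = x - (2 * ⟪x, α⟫ / ⟪α, α⟫) • α}) :
    {Y : E | Y - H ∈ Γ₀ ∧ ‖Y‖ = ‖H‖} = {Y : E | ∃ w ∈ W₀H, w H = Y} :=
  focal_equivalents_eq_orbit_general Φ hne hrefl hint Γ₀ hΓ₀ H hH W₀H hW₀H
end
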